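/- The set of exceptional classes in L is a single orbit of the Weyl group W_6: an element x of L satisfies ⟨x, x⟩ = −1 and ⟨x, κ⟩ = 1 if and only if there exists w ∈ W_6 with w(e_1) = x. -/
import Mathlib


/-- The intersection form on the divisor class lattice `L = Fin 7 → ℤ`:
`⟨x, y⟩ = x₀y₀ − x₁y₁ − ⋯ − x₆y₆`. -/
def form (x y : Fin 7 → ℤ) : ℤ :=
  x 0 * y 0 - x 1 * y 1 - x 2 * y 2 - x 3 * y 3 - x 4 * y 4 - x 5 * y 5 - x 6 * y 6

/-- The standard basis vectors `e 0, …, e 6` of `L`. -/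
def e (i : Fin 7) : Fin 7 → ℤ := fun j => if j = i then 1 else 0

/-- The anticanonical class `κ = 3e₀ − e₁ − ⋯ − e₆`. -/
def kappa : Fin 7 → ℤ := (3 : ℤ) • e 0 - e 1 - e 2 - e 3 - e 4 - e 5 - e 6

/-- The simple roots `r₀ = e₀ − e₁ − e₂ − e₃` and `rᵢ = eᵢ − e_{i+1}` for `1 ≤ i ≤ 5`. -/
def r : Fin 6 → (Fin 7 → ℤ) :=
  ![e 0 - e 1 - e 2 - e 3, e 1 - e 2, e 2 - e 3, e 3 - e 4, e 4 - e 5, e 5 - e 6]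

lemma form_add_left (x y v : Fin 7 → ℤ) : form (x + y) v = form x v + form y v := by
  simp only [form, Pi.add_apply]; ring

lemma form_smul_left (c : ℤ) (x v : Fin 7 → ℤ) : form (c • x) v = c * form x v := by
  simp only [form, Pi.smul_apply, smul_eq_mul]; ring

/-- The reflection `x ↦ x + ⟨x, v⟩·v` as a ℤ-linear map. -/
def reflMap (v : Fin 7 → ℤ) : (Fin 7 → ℤ) →ₗ[ℤ] (Fin 7 → ℤ) where
  toFun x := x + form x v • v
  map_add' x y := by
    funext j
    simp only [form, Pi.add_apply, Pi.smul_apply, smul_eq_mul]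
    ring
  map_smul' c x := by
    funext j
    simp only [form, Pi.add_apply, Pi.smul_apply, smul_eq_mul, RingHom.id_apply]
    ring

lemma reflMap_invol (v : Fin 7 → ℤ) (hv : form v v = -2) (x : Fin 7 → ℤ) :
    reflMap v (reflMap v x) = x := by
  show (x + form x v • v) + form (x + form x v • v) v • v = x
  rw [form_add_left, form_smul_left, hv]
  module

/-- The reflection `sᵢ(x) = x + ⟨x, rᵢ⟩·rᵢ` through the simple root `rᵢ`,
as a ℤ-linear automorphism of `L`. -/
def s (i : Fin 6) : (Fin 7 → ℤ) ≃ₗ[ℤ] (Fin 7 → ℤ) :=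
  LinearEquiv.ofLinear (reflMap (r i)) (reflMap (r i))
    (LinearMap.ext fun x => reflMap_invol (r i) (by fin_cases i <;> decide) x)
    (LinearMap.ext fun x => reflMap_invol (r i) (by fin_cases i <;> decide) x)

/-- The Weyl group `W₆`: the subgroup of the group of ℤ-linear automorphisms of `L`
generated by the reflections `s₀, …, s₅`. -/
def W6 : Subgroup ((Fin 7 → ℤ) ≃ₗ[ℤ] (Fin 7 → ℤ)) :=
  Subgroup.closure (Set.range s)


lemma form_comm (x y : Fin 7 → ℤ) : form x y = form y x := by
  simp only [form]; ring

lemma form_add_right (x y v : Fin 7 → ℤ) : form v (x + y) = form v x + form v y := by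
  simp only [form, Pi.add_apply]; ring

lemma form_smul_right (c : ℤ) (x v : Fin 7 → ℤ) : form v (c • x) = c * form v x := by
  simp only [form, Pi.smul_apply, smul_eq_mul]; ring

lemma s_mem (i : Fin 6) : s i ∈ W6 :=
  Subgroup.subset_closure ⟨i, rfl⟩

lemma s_apply (i : Fin 6) (x : Fin 7 → ℤ) : s i x = x + form x (r i) • r i := rfl

lemma form_s (i : Fin 6) (x y : Fin 7 → ℤ) : form (s i x) (s i y) = form x y := by
  have hv : form (r i) (r i) = -2 := by fin_cases i <;> decide
  rw [s_apply, s_apply, form_add_left, form_add_right, form_add_right, form_smul_left,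
    form_smul_left, form_smul_right, form_smul_right, hv, form_comm (r i) y]
  ring

lemma form_inv (w : (Fin 7 → ℤ) ≃ₗ[ℤ] (Fin 7 → ℤ)) (hw : w ∈ W6) (x y : Fin 7 → ℤ) :
    form (w x) (w y) = form x y := by
  induction hw using Subgroup.closure_induction generalizing x y with
  | mem g hg => obtain ⟨i, rfl⟩ := hg; exact form_s i x y
  | one => rfl
  | mul g h _ _ hg hh => exact (hg (h x) (h y)).trans (hh x y)
  | inv g _ hg =>
      have h1 : g (g⁻¹ x) = x := g.apply_symm_apply x
      have h2 : g (g⁻¹ y) = y := g.apply_symm_apply y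
      have := hg (g⁻¹ x) (g⁻¹ y)
      rw [h1, h2] at this
      exact this.symm

lemma orb1 : ∃ w ∈ W6, ⇑w (e 1) = (![0, 0, 0, 0, 0, 0, 1] : Fin 7 → ℤ) :=
  ⟨s 5 * s 4 * s 3 * s 2 * s 1, (mul_mem (mul_mem (mul_mem (mul_mem (s_mem 5) (s_mem 4)) (s_mem 3)) (s_mem 2)) (s_mem 1)), by decide⟩

lemma orb2 : ∃ w ∈ W6, ⇑w (e 1) = (![0, 0, 0, 0, 0, 1, 0] : Fin 7 → ℤ) :=
  ⟨s 4 * s 3 * s 2 * s 1, (mul_mem (mul_mem (mul_mem (s_mem 4) (s_mem 3)) (s_mem 2)) (s_mem 1)), by decide⟩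

lemma orb3 : ∃ w ∈ W6, ⇑w (e 1) = (![0, 0, 0, 0, 1, 0, 0] : Fin 7 → ℤ) :=
  ⟨s 3 * s 2 * s 1, (mul_mem (mul_mem (s_mem 3) (s_mem 2)) (s_mem 1)), by decide⟩

lemma orb4 : ∃ w ∈ W6, ⇑w (e 1) = (![0, 0, 0, 1, 0, 0, 0] : Fin 7 → ℤ) :=
  ⟨s 2 * s 1, (mul_mem (s_mem 2) (s_mem 1)), by decide⟩

lemma orb5 : ∃ w ∈ W6, ⇑w (e 1) = (![0, 0, 1, 0, 0, 0, 0] : Fin 7 → ℤ) :=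
  ⟨s 1, (s_mem 1), by decide⟩

lemma orb6 : ∃ w ∈ W6, ⇑w (e 1) = (![0, 1, 0, 0, 0, 0, 0] : Fin 7 → ℤ) :=
  ⟨1, (one_mem W6), by decide⟩

lemma orb7 : ∃ w ∈ W6, ⇑w (e 1) = (![1, -1, -1, 0, 0, 0, 0] : Fin 7 → ℤ) :=
  ⟨s 2 * s 1 * s 0, (mul_mem (mul_mem (s_mem 2) (s_mem 1)) (s_mem 0)), by decide⟩

lemma orb8 : ∃ w ∈ W6, ⇑w (e 1) = (![1, -1, 0, -1, 0, 0, 0] : Fin 7 → ℤ) :=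
  ⟨s 1 * s 0, (mul_mem (s_mem 1) (s_mem 0)), by decide⟩

lemma orb9 : ∃ w ∈ W6, ⇑w (e 1) = (![1, -1, 0, 0, -1, 0, 0] : Fin 7 → ℤ) :=
  ⟨s 3 * s 1 * s 0, (mul_mem (mul_mem (s_mem 3) (s_mem 1)) (s_mem 0)), by decide⟩

lemma orb10 : ∃ w ∈ W6, ⇑w (e 1) = (![1, -1, 0, 0, 0, -1, 0] : Fin 7 → ℤ) :=
  ⟨s 4 * s 3 * s 1 * s 0, (mul_mem (mul_mem (mul_mem (s_mem 4) (s_mem 3)) (s_mem 1)) (s_mem 0)), by decide⟩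

lemma orb11 : ∃ w ∈ W6, ⇑w (e 1) = (![1, -1, 0, 0, 0, 0, -1] : Fin 7 → ℤ) :=
  ⟨s 5 * s 4 * s 3 * s 1 * s 0, (mul_mem (mul_mem (mul_mem (mul_mem (s_mem 5) (s_mem 4)) (s_mem 3)) (s_mem 1)) (s_mem 0)), by decide⟩

lemma orb12 : ∃ w ∈ W6, ⇑w (e 1) = (![1, 0, -1, -1, 0, 0, 0] : Fin 7 → ℤ) :=
  ⟨s 0, (s_mem 0), by decide⟩

lemma orb13 : ∃ w ∈ W6, ⇑w (e 1) = (![1, 0, -1, 0, -1, 0, 0] : Fin 7 → ℤ) :=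
  ⟨s 3 * s 0, (mul_mem (s_mem 3) (s_mem 0)), by decide⟩

lemma orb14 : ∃ w ∈ W6, ⇑w (e 1) = (![1, 0, -1, 0, 0, -1, 0] : Fin 7 → ℤ) :=
  ⟨s 4 * s 3 * s 0, (mul_mem (mul_mem (s_mem 4) (s_mem 3)) (s_mem 0)), by decide⟩

lemma orb15 : ∃ w ∈ W6, ⇑w (e 1) = (![1, 0, -1, 0, 0, 0, -1] : Fin 7 → ℤ) :=
  ⟨s 5 * s 4 * s 3 * s 0, (mul_mem (mul_mem (mul_mem (s_mem 5) (s_mem 4)) (s_mem 3)) (s_mem 0)), by decide⟩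

lemma orb16 : ∃ w ∈ W6, ⇑w (e 1) = (![1, 0, 0, -1, -1, 0, 0] : Fin 7 → ℤ) :=
  ⟨s 2 * s 3 * s 0, (mul_mem (mul_mem (s_mem 2) (s_mem 3)) (s_mem 0)), by decide⟩

lemma orb17 : ∃ w ∈ W6, ⇑w (e 1) = (![1, 0, 0, -1, 0, -1, 0] : Fin 7 → ℤ) :=
  ⟨s 4 * s 2 * s 3 * s 0, (mul_mem (mul_mem (mul_mem (s_mem 4) (s_mem 2)) (s_mem 3)) (s_mem 0)), by decide⟩

lemma orb18 : ∃ w ∈ W6, ⇑w (e 1) = (![1, 0, 0, -1, 0, 0, -1] : Fin 7 → ℤ) :=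
  ⟨s 5 * s 4 * s 2 * s 3 * s 0, (mul_mem (mul_mem (mul_mem (mul_mem (s_mem 5) (s_mem 4)) (s_mem 2)) (s_mem 3)) (s_mem 0)), by decide⟩

lemma orb19 : ∃ w ∈ W6, ⇑w (e 1) = (![1, 0, 0, 0, -1, -1, 0] : Fin 7 → ℤ) :=
  ⟨s 3 * s 4 * s 2 * s 3 * s 0, (mul_mem (mul_mem (mul_mem (mul_mem (s_mem 3) (s_mem 4)) (s_mem 2)) (s_mem 3)) (s_mem 0)), by decide⟩

lemma orb20 : ∃ w ∈ W6, ⇑w (e 1) = (![1, 0, 0, 0, -1, 0, -1] : Fin 7 → ℤ) :=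
  ⟨s 5 * s 3 * s 4 * s 2 * s 3 * s 0, (mul_mem (mul_mem (mul_mem (mul_mem (mul_mem (s_mem 5) (s_mem 3)) (s_mem 4)) (s_mem 2)) (s_mem 3)) (s_mem 0)), by decide⟩

lemma orb21 : ∃ w ∈ W6, ⇑w (e 1) = (![1, 0, 0, 0, 0, -1, -1] : Fin 7 → ℤ) :=
  ⟨s 4 * s 5 * s 3 * s 4 * s 2 * s 3 * s 0, (mul_mem (mul_mem (mul_mem (mul_mem (mul_mem (mul_mem (s_mem 4) (s_mem 5)) (s_mem 3)) (s_mem 4)) (s_mem 2)) (s_mem 3)) (s_mem 0)), by decide⟩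

lemma orb22 : ∃ w ∈ W6, ⇑w (e 1) = (![2, -1, -1, -1, -1, -1, 0] : Fin 7 → ℤ) :=
  ⟨s 0 * s 3 * s 4 * s 2 * s 3 * s 0, (mul_mem (mul_mem (mul_mem (mul_mem (mul_mem (s_mem 0) (s_mem 3)) (s_mem 4)) (s_mem 2)) (s_mem 3)) (s_mem 0)), by decide⟩

lemma orb23 : ∃ w ∈ W6, ⇑w (e 1) = (![2, -1, -1, -1, -1, 0, -1] : Fin 7 → ℤ) :=
  ⟨s 5 * s 0 * s 3 * s 4 * s 2 * s 3 * s 0, (mul_mem (mul_mem (mul_mem (mul_mem (mul_mem (mul_mem (s_mem 5) (s_mem 0)) (s_mem 3)) (s_mem 4)) (s_mem 2)) (s_mem 3)) (s_mem 0)), by decide⟩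

lemma orb24 : ∃ w ∈ W6, ⇑w (e 1) = (![2, -1, -1, -1, 0, -1, -1] : Fin 7 → ℤ) :=
  ⟨s 4 * s 5 * s 0 * s 3 * s 4 * s 2 * s 3 * s 0, (mul_mem (mul_mem (mul_mem (mul_mem (mul_mem (mul_mem (mul_mem (s_mem 4) (s_mem 5)) (s_mem 0)) (s_mem 3)) (s_mem 4)) (s_mem 2)) (s_mem 3)) (s_mem 0)), by decide⟩

lemma orb25 : ∃ w ∈ W6, ⇑w (e 1) = (![2, -1, -1, 0, -1, -1, -1] : Fin 7 → ℤ) :=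
  ⟨s 3 * s 4 * s 5 * s 0 * s 3 * s 4 * s 2 * s 3 * s 0, (mul_mem (mul_mem (mul_mem (mul_mem (mul_mem (mul_mem (mul_mem (mul_mem (s_mem 3) (s_mem 4)) (s_mem 5)) (s_mem 0)) (s_mem 3)) (s_mem 4)) (s_mem 2)) (s_mem 3)) (s_mem 0)), by decide⟩

lemma orb26 : ∃ w ∈ W6, ⇑w (e 1) = (![2, -1, 0, -1, -1, -1, -1] : Fin 7 → ℤ) :=
  ⟨s 2 * s 3 * s 4 * s 5 * s 0 * s 3 * s 4 * s 2 * s 3 * s 0, (mul_mem (mul_mem (mul_mem (mul_mem (mul_mem (mul_mem (mul_mem (mul_mem (mul_mem (s_mem 2) (s_mem 3)) (s_mem 4)) (s_mem 5)) (s_mem 0)) (s_mem 3)) (s_mem 4)) (s_mem 2)) (s_mem 3)) (s_mem 0)), by decide⟩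

lemma orb27 : ∃ w ∈ W6, ⇑w (e 1) = (![2, 0, -1, -1, -1, -1, -1] : Fin 7 → ℤ) :=
  ⟨s 1 * s 2 * s 3 * s 4 * s 5 * s 0 * s 3 * s 4 * s 2 * s 3 * s 0, (mul_mem (mul_mem (mul_mem (mul_mem (mul_mem (mul_mem (mul_mem (mul_mem (mul_mem (mul_mem (s_mem 1) (s_mem 2)) (s_mem 3)) (s_mem 4)) (s_mem 5)) (s_mem 0)) (s_mem 3)) (s_mem 4)) (s_mem 2)) (s_mem 3)) (s_mem 0)), by decide⟩

set_option maxHeartbeats 4000000 in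
lemma key (t0 t1 t2 t3 t4 t5 t6 : ℤ)
    (h1 : t0*t0 - t1*t1 - t2*t2 - t3*t3 - t4*t4 - t5*t5 - t6*t6 = -1)
    (h2 : 3*t0 + t1 + t2 + t3 + t4 + t5 + t6 = 1) :
    ∃ w ∈ W6, ⇑w (e 1) = ![t0, t1, t2, t3, t4, t5, t6] := by
  have key0 : 6*(t0*t0+1) - (1-3*t0)*(1-3*t0) =
      (t1-t2)^2 + (t1-t3)^2 + (t1-t4)^2 + (t1-t5)^2 + (t1-t6)^2 + (t2-t3)^2 + (t2-t4)^2
      + (t2-t5)^2 + (t2-t6)^2 + (t3-t4)^2 + (t3-t5)^2 + (t3-t6)^2 + (t4-t5)^2 + (t4-t6)^2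
      + (t5-t6)^2 := by
    linear_combination 6*h1 + (t1+t2+t3+t4+t5+t6+1-3*t0)*h2
  have hpos : 0 ≤ 6*(t0*t0+1) - (1-3*t0)*(1-3*t0) := by rw [key0]; positivity
  have hb0l : (0:ℤ) ≤ t0 := by nlinarith only [hpos, sq_nonneg (t0+1)]
  have hb0u : t0 ≤ (2:ℤ) := by nlinarith only [hpos, sq_nonneg (t0-3)]
  interval_cases t0
  · -- t0 = 0
    have q1 : t1*t1 ≤ 1 := by linarith only [h1, mul_self_nonneg t2, mul_self_nonneg t3, mul_self_nonneg t4, mul_self_nonneg t5, mul_self_nonneg t6]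
    have bl1 : (-1:ℤ) ≤ t1 := by nlinarith only [q1, sq_nonneg (t1+1)]
    have bu1 : t1 ≤ (1:ℤ) := by nlinarith only [q1, sq_nonneg (t1-1)]
    have q2 : t2*t2 ≤ 1 := by linarith only [h1, mul_self_nonneg t1, mul_self_nonneg t3, mul_self_nonneg t4, mul_self_nonneg t5, mul_self_nonneg t6]
    have bl2 : (-1:ℤ) ≤ t2 := by nlinarith only [q2, sq_nonneg (t2+1)]
    have bu2 : t2 ≤ (1:ℤ) := by nlinarith only [q2, sq_nonneg (t2-1)]
    have q3 : t3*t3 ≤ 1 := by linarith only [h1, mul_self_nonneg t1, mul_self_nonneg t2, mul_self_nonneg t4, mul_self_nonneg t5, mul_self_nonneg t6]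
    have bl3 : (-1:ℤ) ≤ t3 := by nlinarith only [q3, sq_nonneg (t3+1)]
    have bu3 : t3 ≤ (1:ℤ) := by nlinarith only [q3, sq_nonneg (t3-1)]
    have q4 : t4*t4 ≤ 1 := by linarith only [h1, mul_self_nonneg t1, mul_self_nonneg t2, mul_self_nonneg t3, mul_self_nonneg t5, mul_self_nonneg t6]
    have bl4 : (-1:ℤ) ≤ t4 := by nlinarith only [q4, sq_nonneg (t4+1)]
    have bu4 : t4 ≤ (1:ℤ) := by nlinarith only [q4, sq_nonneg (t4-1)]
    have q5 : t5*t5 ≤ 1 := by linarith only [h1, mul_self_nonneg t1, mul_self_nonneg t2, mul_self_nonneg t3, mul_self_nonneg t4, mul_self_nonneg t6]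
    have bl5 : (-1:ℤ) ≤ t5 := by nlinarith only [q5, sq_nonneg (t5+1)]
    have bu5 : t5 ≤ (1:ℤ) := by nlinarith only [q5, sq_nonneg (t5-1)]
    have q6 : t6*t6 ≤ 1 := by linarith only [h1, mul_self_nonneg t1, mul_self_nonneg t2, mul_self_nonneg t3, mul_self_nonneg t4, mul_self_nonneg t5]
    have bl6 : (-1:ℤ) ≤ t6 := by nlinarith only [q6, sq_nonneg (t6+1)]
    have bu6 : t6 ≤ (1:ℤ) := by nlinarith only [q6, sq_nonneg (t6-1)]
    have h6 : t6 = 1 - 3*0 - t1 - t2 - t3 - t4 - t5 := by omega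
    subst h6
    interval_cases t1 <;> interval_cases t2 <;> interval_cases t3 <;> interval_cases t4 <;> interval_cases t5 <;> first | (exfalso; revert h1; decide) | exact orb1 | exact orb2 | exact orb3 | exact orb4 | exact orb5 | exact orb6 | exact orb7 | exact orb8 | exact orb9 | exact orb10 | exact orb11 | exact orb12 | exact orb13 | exact orb14 | exact orb15 | exact orb16 | exact orb17 | exact orb18 | exact orb19 | exact orb20 | exact orb21 | exact orb22 | exact orb23 | exact orb24 | exact orb25 | exact orb26 | exact orb27
  · -- t0 = 1
    have q1 : t1*t1 ≤ 2 := by linarith only [h1, mul_self_nonneg t2, mul_self_nonneg t3, mul_self_nonneg t4, mul_self_nonneg t5, mul_self_nonneg t6]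
    have bl1 : (-1:ℤ) ≤ t1 := by nlinarith only [q1, sq_nonneg (t1+1)]
    have bu1 : t1 ≤ (1:ℤ) := by nlinarith only [q1, sq_nonneg (t1-1)]
    have q2 : t2*t2 ≤ 2 := by linarith only [h1, mul_self_nonneg t1, mul_self_nonneg t3, mul_self_nonneg t4, mul_self_nonneg t5, mul_self_nonneg t6]
    have bl2 : (-1:ℤ) ≤ t2 := by nlinarith only [q2, sq_nonneg (t2+1)]
    have bu2 : t2 ≤ (1:ℤ) := by nlinarith only [q2, sq_nonneg (t2-1)]
    have q3 : t3*t3 ≤ 2 := by linarith only [h1, mul_self_nonneg t1, mul_self_nonneg t2, mul_self_nonneg t4, mul_self_nonneg t5, mul_self_nonneg t6]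
    have bl3 : (-1:ℤ) ≤ t3 := by nlinarith only [q3, sq_nonneg (t3+1)]
    have bu3 : t3 ≤ (1:ℤ) := by nlinarith only [q3, sq_nonneg (t3-1)]
    have q4 : t4*t4 ≤ 2 := by linarith only [h1, mul_self_nonneg t1, mul_self_nonneg t2, mul_self_nonneg t3, mul_self_nonneg t5, mul_self_nonneg t6]
    have bl4 : (-1:ℤ) ≤ t4 := by nlinarith only [q4, sq_nonneg (t4+1)]
    have bu4 : t4 ≤ (1:ℤ) := by nlinarith only [q4, sq_nonneg (t4-1)]
    have q5 : t5*t5 ≤ 2 := by linarith only [h1, mul_self_nonneg t1, mul_self_nonneg t2, mul_self_nonneg t3, mul_self_nonneg t4, mul_self_nonneg t6]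
    have bl5 : (-1:ℤ) ≤ t5 := by nlinarith only [q5, sq_nonneg (t5+1)]
    have bu5 : t5 ≤ (1:ℤ) := by nlinarith only [q5, sq_nonneg (t5-1)]
    have q6 : t6*t6 ≤ 2 := by linarith only [h1, mul_self_nonneg t1, mul_self_nonneg t2, mul_self_nonneg t3, mul_self_nonneg t4, mul_self_nonneg t5]
    have bl6 : (-1:ℤ) ≤ t6 := by nlinarith only [q6, sq_nonneg (t6+1)]
    have bu6 : t6 ≤ (1:ℤ) := by nlinarith only [q6, sq_nonneg (t6-1)]
    have h6 : t6 = 1 - 3*1 - t1 - t2 - t3 - t4 - t5 := by omega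
    subst h6
    interval_cases t1 <;> interval_cases t2 <;> interval_cases t3 <;> interval_cases t4 <;> interval_cases t5 <;> first | (exfalso; revert h1; decide) | exact orb1 | exact orb2 | exact orb3 | exact orb4 | exact orb5 | exact orb6 | exact orb7 | exact orb8 | exact orb9 | exact orb10 | exact orb11 | exact orb12 | exact orb13 | exact orb14 | exact orb15 | exact orb16 | exact orb17 | exact orb18 | exact orb19 | exact orb20 | exact orb21 | exact orb22 | exact orb23 | exact orb24 | exact orb25 | exact orb26 | exact orb27
  · -- t0 = 2
    have sq2 : (t1+1)*(t1+1) + (t2+1)*(t2+1) + (t3+1)*(t3+1) + (t4+1)*(t4+1) + (t5+1)*(t5+1) + (t6+1)*(t6+1) = 1 := by linear_combination -h1 + 2*h2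
    have q1 : (t1+1)*(t1+1) ≤ 1 := by linarith only [sq2, mul_self_nonneg (t2+1), mul_self_nonneg (t3+1), mul_self_nonneg (t4+1), mul_self_nonneg (t5+1), mul_self_nonneg (t6+1)]
    have bl1 : (-2:ℤ) ≤ t1 := by nlinarith only [q1, sq_nonneg (t1+2)]
    have bu1 : t1 ≤ (0:ℤ) := by nlinarith only [q1, sq_nonneg t1]
    have q2 : (t2+1)*(t2+1) ≤ 1 := by linarith only [sq2, mul_self_nonneg (t1+1), mul_self_nonneg (t3+1), mul_self_nonneg (t4+1), mul_self_nonneg (t5+1), mul_self_nonneg (t6+1)]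
    have bl2 : (-2:ℤ) ≤ t2 := by nlinarith only [q2, sq_nonneg (t2+2)]
    have bu2 : t2 ≤ (0:ℤ) := by nlinarith only [q2, sq_nonneg t2]
    have q3 : (t3+1)*(t3+1) ≤ 1 := by linarith only [sq2, mul_self_nonneg (t1+1), mul_self_nonneg (t2+1), mul_self_nonneg (t4+1), mul_self_nonneg (t5+1), mul_self_nonneg (t6+1)]
    have bl3 : (-2:ℤ) ≤ t3 := by nlinarith only [q3, sq_nonneg (t3+2)]
    have bu3 : t3 ≤ (0:ℤ) := by nlinarith only [q3, sq_nonneg t3]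
    have q4 : (t4+1)*(t4+1) ≤ 1 := by linarith only [sq2, mul_self_nonneg (t1+1), mul_self_nonneg (t2+1), mul_self_nonneg (t3+1), mul_self_nonneg (t5+1), mul_self_nonneg (t6+1)]
    have bl4 : (-2:ℤ) ≤ t4 := by nlinarith only [q4, sq_nonneg (t4+2)]
    have bu4 : t4 ≤ (0:ℤ) := by nlinarith only [q4, sq_nonneg t4]
    have q5 : (t5+1)*(t5+1) ≤ 1 := by linarith only [sq2, mul_self_nonneg (t1+1), mul_self_nonneg (t2+1), mul_self_nonneg (t3+1), mul_self_nonneg (t4+1), mul_self_nonneg (t6+1)]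
    have bl5 : (-2:ℤ) ≤ t5 := by nlinarith only [q5, sq_nonneg (t5+2)]
    have bu5 : t5 ≤ (0:ℤ) := by nlinarith only [q5, sq_nonneg t5]
    have q6 : (t6+1)*(t6+1) ≤ 1 := by linarith only [sq2, mul_self_nonneg (t1+1), mul_self_nonneg (t2+1), mul_self_nonneg (t3+1), mul_self_nonneg (t4+1), mul_self_nonneg (t5+1)]
    have bl6 : (-2:ℤ) ≤ t6 := by nlinarith only [q6, sq_nonneg (t6+2)]
    have bu6 : t6 ≤ (0:ℤ) := by nlinarith only [q6, sq_nonneg t6]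
    have h6 : t6 = 1 - 3*2 - t1 - t2 - t3 - t4 - t5 := by omega
    subst h6
    interval_cases t1 <;> interval_cases t2 <;> interval_cases t3 <;> interval_cases t4 <;> interval_cases t5 <;> first | (exfalso; revert h1; decide) | exact orb1 | exact orb2 | exact orb3 | exact orb4 | exact orb5 | exact orb6 | exact orb7 | exact orb8 | exact orb9 | exact orb10 | exact orb11 | exact orb12 | exact orb13 | exact orb14 | exact orb15 | exact orb16 | exact orb17 | exact orb18 | exact orb19 | exact orb20 | exact orb21 | exact orb22 | exact orb23 | exact orb24 | exact orb25 | exact orb26 | exact orb27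

/-- The set of exceptional classes is a single `W₆`-orbit: `⟨x,x⟩ = −1` and
`⟨x,κ⟩ = 1` iff `x = w(e₁)` for some `w ∈ W₆`. -/
theorem statement_15 (x : Fin 7 → ℤ) :
    (form x x = -1 ∧ form x kappa = 1) ↔ ∃ w ∈ W6, w (e 1) = x := by
  constructor
  · rintro ⟨h1, h2⟩
    have h1' : x 0 * x 0 - x 1 * x 1 - x 2 * x 2 - x 3 * x 3 - x 4 * x 4 - x 5 * x 5
        - x 6 * x 6 = -1 := h1
    have h2' : 3 * x 0 + x 1 + x 2 + x 3 + x 4 + x 5 + x 6 = 1 := by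
      have : form x kappa = 3 * x 0 + x 1 + x 2 + x 3 + x 4 + x 5 + x 6 := by
        have h0 : kappa 0 = 3 := by decide
        have hk1 : kappa 1 = -1 := by decide
        have hk2 : kappa 2 = -1 := by decide
        have hk3 : kappa 3 = -1 := by decide
        have hk4 : kappa 4 = -1 := by decide
        have hk5 : kappa 5 = -1 := by decide
        have hk6 : kappa 6 = -1 := by decide
        simp only [form, h0, hk1, hk2, hk3, hk4, hk5, hk6]
        ring
      rw [this] at h2; exact h2
    obtain ⟨w, hw, hspec⟩ := key (x 0) (x 1) (x 2) (x 3) (x 4) (x 5) (x 6) h1' h2'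
    refine ⟨w, hw, ?_⟩
    rw [hspec]
    funext j
    fin_cases j <;> rfl
  · rintro ⟨w, hw, rfl⟩
    constructor
    · rw [form_inv w hw]; decide
    · have hk : ∀ v, form (w v) kappa = form v kappa := by
        induction hw using Subgroup.closure_induction with
        | mem g hg =>
            obtain ⟨i, rfl⟩ := hg
            intro v
            have hr : form (r i) kappa = 0 := by fin_cases i <;> decide
            rw [s_apply, form_add_left, form_smul_left, hr, mul_zero, add_zero]
        | one => intro v; rfl
        | mul g h _ _ hg hh => intro v; rw [show (g*h) v = g (h v) from rfl, hg, hh]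
        | inv g _ hg =>
            intro v
            have h1 : g (g⁻¹ v) = v := g.apply_symm_apply v
            have := hg (g⁻¹ v)
            rw [h1] at this
            exact this.symm
      rw [hk]; decide
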